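/- arXiv:1110.3490 — 6 statements merged into one kernel-verified Lean document; each statement's English description precedes it below -/
import Mathlib

section
/- Let n, r ∈ ℕ with n ≥ r and r dividing n. Let G be a K_{r+1}-free graph on n vertices whose degree sequence d_1 ≤ ⋯ ≤ d_n satisfies d_{n/r} ≥ (r−1)n/r. Then G is a subgraph of the Turán graph T(n,r); that is, the vertex set of G can be partitioned into r independent sets each of size exactly n/r. -/
/-!
Let `k = n / r`. The hypothesis says that more than `(r - 1) k` vertices have at most `k`
non-neighbours (counting the vertex itself). Greedily, `r` of them form a clique `v₁, …, vᵣ`: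
the non-neighbourhoods of `j < r` of them cover at most `(r - 1) k` vertices, so some vertex
of high degree lies outside all of them. Since `G` is `K_{r+1}`-free, the non-neighbourhoods
`Wᵢ` of the `vᵢ` cover all `n = r k` vertices, so these `r` sets of size at most `k` partition
the vertex set into parts of size exactly `k`. An edge inside `Wᵢ` would, together with the
`vⱼ` (`j ≠ i`), to which both its ends are adjacent by disjointness, span a `K_{r+1}`.
-/

noncomputable def deg {V : Type*} (G : SimpleGraph V) (v : V) : ℕ := Nat.card (G.neighborSet v)

open Finset Function

theorem deg_eq_degree {V : Type*} (G : SimpleGraph V) (v : V) [Fintype (G.neighborSet v)] :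
    deg G v = G.degree v := by
  rw [deg, Nat.card_eq_fintype_card, SimpleGraph.card_neighborSet_eq_degree]

theorem sub_val_le_card_filter_of_monotone {α : Type*} [Fintype α] {n : ℕ} {d : Fin n → ℕ}
    (hmono : Monotone d) (f : α → ℕ) {σ : Fin n → α} (hσ : Injective σ)
    (hd : ∀ i, d i = f (σ i)) (i : Fin n) : n - i ≤ #{x | d i ≤ f x} := by
  classical
  calc n - i = #((Ici i).image σ) := by rw [card_image_of_injective _ hσ, Fin.card_Ici]
    _ ≤ #{x | d i ≤ f x} := card_le_card fun x hx => by
      obtain ⟨j, hij, rfl⟩ := mem_image.mp hx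
      simpa [← hd] using hmono (mem_Ici.mp hij)

theorem Finset.card_eq_and_pairwise_disjoint_of_biUnion_eq_univ {α ι : Type*} [Fintype α]
    [DecidableEq α] [Fintype ι] [DecidableEq ι] {W : ι → Finset α} {k : ℕ}
    (hcover : univ.biUnion W = univ) (hle : ∀ i, #(W i) ≤ k)
    (hcard : Fintype.card ι * k ≤ Fintype.card α) :
    (∀ i, #(W i) = k) ∧ Pairwise (Disjoint on W) := by
  set m : α → ℕ := fun x => #{i | x ∈ W i}
  have hdouble : ∑ i, #(W i) = ∑ x, m x := by
    simpa [hcover] using sum_card_eq_sum_biUnion_card W univ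
  have hm_pos : ∀ x, 1 ≤ m x := fun x => by
    obtain ⟨i, -, hi⟩ := mem_biUnion.mp (hcover ▸ mem_univ x)
    exact card_pos.mpr ⟨i, mem_filter.mpr ⟨mem_univ i, hi⟩⟩
  have hsum_le : ∑ i, #(W i) ≤ Fintype.card α :=
    calc ∑ i, #(W i) ≤ ∑ _i : ι, k := sum_le_sum fun i _ => hle i
      _ = Fintype.card ι * k := by simp
      _ ≤ Fintype.card α := hcard
  have hsum_eq : ∑ x, m x = ∑ _x : α, 1 := by
    refine le_antisymm ?_ (sum_le_sum fun x _ => hm_pos x)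
    simpa [← hdouble] using hsum_le
  have hm_one : ∀ x, m x = 1 := fun x =>
    ((sum_eq_sum_iff_of_le fun x _ => hm_pos x).mp hsum_eq.symm x (mem_univ x)).symm
  refine ⟨fun i => ?_, fun i j hij => disjoint_left.mpr fun x hxi hxj => hij ?_⟩
  · have hsum_k : ∑ i, #(W i) = ∑ _i : ι, k := by
      refine le_antisymm (sum_le_sum fun i _ => hle i) ?_
      simpa [hdouble, hsum_eq] using hcard
    exact (sum_eq_sum_iff_of_le fun i _ => hle i).mp hsum_k i (mem_univ i)
  · exact card_le_one.mp (hm_one x).le i (by simpa [m] using hxi) j (by simpa [m] using hxj)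

namespace SimpleGraph

variable {V : Type*} [DecidableEq V] {G : SimpleGraph V} {C : Finset V} {r : ℕ}

theorem IsNClique.exists_not_adj_of_cliqueFree (hfree : G.CliqueFree (r + 1))
    (hC : G.IsNClique r C) (x : V) : ∃ v ∈ C, ¬ G.Adj v x := by
  by_contra! h
  exact hfree _ (hC.insert fun v hv => (h v hv).symm)

theorem IsNClique.not_adj_of_cliqueFree (hfree : G.CliqueFree (r + 1)) (hC : G.IsNClique r C)
    {v x y : V} (hv : v ∈ C) (hx : ∀ w ∈ C.erase v, G.Adj w x)
    (hy : ∀ w ∈ C.erase v, G.Adj w y) : ¬ G.Adj x y := by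
  intro hxy
  have hclique : G.IsNClique (r - 1 + 1 + 1) (insert x (insert y (C.erase v))) := by
    refine ((hC.erase_of_mem hv).insert fun w hw => (hy w hw).symm).insert fun w hw => ?_
    obtain rfl | hw := mem_insert.mp hw
    exacts [hxy, (hx w hw).symm]
  rw [Nat.sub_add_cancel (hC.card_eq ▸ card_pos.mpr ⟨v, hv⟩)] at hclique
  exact hfree _ hclique

variable [Fintype V] [DecidableRel G.Adj]

theorem exists_isNClique_subset_of_card_compl_neighborFinset_le {S : Finset V} {k : ℕ}
    (hS : ∀ v ∈ S, #(G.neighborFinset v)ᶜ ≤ k) :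
    ∀ r, (r - 1) * k < #S → ∃ C ⊆ S, G.IsNClique r C
  | 0, _ => ⟨∅, empty_subset S, isNClique_empty.mpr rfl⟩
  | r + 1, hcard => by
    obtain ⟨C, hCS, hC⟩ := exists_isNClique_subset_of_card_compl_neighborFinset_le hS r <|
      (Nat.mul_le_mul_right k (Nat.sub_le r 1)).trans_lt hcard
    have hcover : #(C.biUnion fun v => (G.neighborFinset v)ᶜ) < #S :=
      calc #(C.biUnion fun v => (G.neighborFinset v)ᶜ)
          ≤ ∑ v ∈ C, #(G.neighborFinset v)ᶜ := card_biUnion_le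
        _ ≤ ∑ _v ∈ C, k := sum_le_sum fun v hv => hS v (hCS hv)
        _ = r * k := by simp [hC.card_eq]
        _ < #S := by simpa using hcard
    obtain ⟨u, huS, hu⟩ := exists_mem_notMem_of_card_lt_card hcover
    refine ⟨insert u C, insert_subset huS hCS, hC.insert fun v hv => ?_⟩
    by_contra hvu
    exact hu (mem_biUnion.mpr ⟨v, hv, by simpa [G.adj_comm] using hvu⟩)

theorem exists_turan_partition_of_isNClique {k : ℕ} (hfree : G.CliqueFree (r + 1))
    (hC : G.IsNClique r C) (hsmall : ∀ v ∈ C, #(G.neighborFinset v)ᶜ ≤ k)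
    (hcard : r * k ≤ Fintype.card V) :
    ∃ W : Fin r → Finset V,
      (∀ i, #(W i) = k) ∧
      (∀ i, ∀ x ∈ W i, ∀ y ∈ W i, ¬ G.Adj x y) ∧
      (∀ i j, i ≠ j → Disjoint (W i) (W j)) ∧
      univ.biUnion W = univ := by
  let e : Fin r ≃ C := (C.equivFinOfCardEq hC.card_eq).symm
  let W : Fin r → Finset V := fun i => (G.neighborFinset (e i))ᶜ
  have hmem : ∀ i x, x ∈ W i ↔ ¬ G.Adj (e i) x := by simp [W]
  have hcover : univ.biUnion W = univ := eq_univ_of_forall fun x => by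
    obtain ⟨v, hv, hvx⟩ := hC.exists_not_adj_of_cliqueFree hfree x
    exact mem_biUnion.mpr ⟨e.symm ⟨v, hv⟩, mem_univ _, by simpa [hmem] using hvx⟩
  obtain ⟨hW, hdisj⟩ := card_eq_and_pairwise_disjoint_of_biUnion_eq_univ hcover
    (fun i => hsmall _ (e i).2) (by simpa using hcard)
  have hadj : ∀ i, ∀ x ∈ W i, ∀ w ∈ C.erase (e i), G.Adj w x := fun i x hx w hw => by
    obtain ⟨hwi, hwC⟩ := mem_erase.mp hw
    have hj : e.symm ⟨w, hwC⟩ ≠ i := fun h => hwi (by simp [← h])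
    by_contra hwx
    have hxj : x ∈ W (e.symm ⟨w, hwC⟩) := by simpa [hmem] using hwx
    exact Finset.disjoint_left.mp (hdisj hj) hxj hx
  exact ⟨W, hW, fun i x hx y hy => hC.not_adj_of_cliqueFree hfree (e i).2 (hadj i x hx)
    (hadj i y hy), fun i j hij => hdisj hij, hcover⟩

end SimpleGraph

/-- Let `n ≥ r` with `r ∣ n`, and let `G` be a `K_{r+1}`-free graph on `n` vertices whose
nondecreasing degree sequence `d` (realised via a permutation `σ` of the vertices) satisfies
`d_{n/r} ≥ (r-1)n/r`. Then `G ⊆ T(n,r)`: its vertex set can be partitioned into `r`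
independent sets, each of size exactly `n/r`. -/
theorem stmt3 (n r : ℕ) (hr : 1 ≤ r) (hrn : r ≤ n) (hdvd : r ∣ n)
    (G : SimpleGraph (Fin n)) (hfree : G.CliqueFree (r + 1))
    (d : Fin n → ℕ) (σ : Equiv.Perm (Fin n))
    (hmono : Monotone d) (hdeg : ∀ i, d i = deg G (σ i))
    (hcond : ∀ i : Fin n, (i : ℕ) + 1 = n / r → (r - 1) * (n / r) ≤ d i) :
    ∃ W : Fin r → Finset (Fin n),
      (∀ i, (W i).card = n / r) ∧
      (∀ i, ∀ x ∈ W i, ∀ y ∈ W i, ¬ G.Adj x y) ∧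
      (∀ i j, i ≠ j → Disjoint (W i) (W j)) ∧
      Finset.univ.biUnion W = Finset.univ := by
  classical
  obtain ⟨k, rfl⟩ := hdvd
  rw [Nat.mul_div_cancel_left k hr] at hcond ⊢
  have hk : 1 ≤ k := Nat.pos_of_ne_zero fun hk => by simp [hk] at hrn; omega
  have hrk : (r - 1) * k = r * k - k := Nat.sub_one_mul r k
  have hrk' : k ≤ r * k := Nat.le_mul_of_pos_left k hr
  let i₀ : Fin (r * k) := ⟨k - 1, by omega⟩
  have hd₀ : (r - 1) * k ≤ d i₀ := hcond i₀ (by simp [i₀]; omega)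
  set S : Finset (Fin (r * k)) := {v | d i₀ ≤ G.degree v}
  have hsmall : ∀ v ∈ S, #(G.neighborFinset v)ᶜ ≤ k := fun v hv => by
    rw [card_compl, G.card_neighborFinset_eq_degree, Fintype.card_fin]
    have := (mem_filter.mp hv).2
    omega
  have hlarge : r * k - (k - 1) ≤ #S :=
    sub_val_le_card_filter_of_monotone hmono (fun v => G.degree v) σ.injective
      (fun i => (hdeg i).trans (deg_eq_degree G (σ i))) i₀
  obtain ⟨C, hCS, hC⟩ := G.exists_isNClique_subset_of_card_compl_neighborFinset_le hsmall r
    (by omega)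
  exact G.exists_turan_partition_of_isNClique hfree hC (fun v hv => hsmall v (hCS hv)) (by simp)
end

section
/- Let n, r ∈ ℕ with r ≥ 3 and n = kr for some k ≥ 2, and let D ∈ ℕ with n/(r−1) ≤ D ≤ n − r. Then there exists a graph G_2 on n vertices with maximum degree Δ(G_2) = D and exactly D + e(\overline{T}(n−D−1, r−2)) edges such that G_2 has no equitable (n/r)-colouring. (One may take G_2 to be the disjoint union of the star K_{1,D} and the complement of the Turán graph T(n−D−1, r−2).) -/
/-- The number of edges of a graph. -/
noncomputable def edgeCount {V : Type*} (G : SimpleGraph V) : ℕ := Nat.card G.edgeSet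

/-- An equitable `k`-colouring: a proper colouring with `k` colours whose colour classes
differ in size by at most one. -/
def HasEquitableColoring {n : ℕ} (G : SimpleGraph (Fin n)) (k : ℕ) : Prop :=
  ∃ c : Fin n → Fin k,
    (∀ u v, G.Adj u v → c u ≠ c v) ∧
    ∀ i j : Fin k, (Finset.univ.filter fun v => c v = i).card ≤
      (Finset.univ.filter fun v => c v = j).card + 1

/-!
In an equitable `k`-colouring of `k * r` vertices every colour class has at least `r` vertices.
In `K_{1,D} ∪ T̄(m, r - 2)`, where `m = n - D - 1`, the colour class of the centre of the star
contains no leaf, and its other vertices are independent in `T̄(m, r - 2)`, i.e. form a clique of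
the Turán graph `T(m, r - 2)`, which is `(r - 2)`-colourable; so that class has at most `r - 1`
vertices. The maximum degree of `T̄(m, r - 2)` is at most `m / (r - 2)`, which is at most `D`
because `n ≤ D (r - 1)`, so the centre of the star has maximum degree `D`.
-/

open Finset

lemma le_card_fiber_of_equitable {α ι : Type*} [Fintype α] [Fintype ι] [DecidableEq ι]
    {c : α → ι} {r : ℕ} (hcard : Fintype.card α = Fintype.card ι * r)
    (hc : ∀ i j, #{v | c v = i} ≤ #{v | c v = j} + 1) (i : ι) : r ≤ #{v | c v = i} := by
  by_contra! hi
  have : Fintype.card α < ∑ _j : ι, r := by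
    rw [← card_univ, card_eq_sum_card_fiberwise (fun v _ => mem_univ (c v))]
    exact sum_lt_sum (fun j _ => by have := hc j i; omega) ⟨i, mem_univ _, hi⟩
  simp [hcard] at this

lemma HasEquitableColoring.exists_isIndepSet {n k r : ℕ} {G : SimpleGraph (Fin n)}
    (h : HasEquitableColoring G k) (hn : n = k * r) (v : Fin n) :
    ∃ t : Finset (Fin n), v ∈ t ∧ G.IsIndepSet t ∧ r ≤ #t := by
  obtain ⟨c, hproper, hequit⟩ := h
  refine ⟨({w | c w = c v} : Finset (Fin n)), by simp, fun u hu w hw _ hadj => ?_, ?_⟩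
  · simp only [mem_coe, mem_filter, mem_univ, true_and] at hu hw
    exact hproper u w hadj (hu.trans hw.symm)
  · exact le_card_fiber_of_equitable (by simpa using hn) hequit (c v)

namespace SimpleGraph

section GraphInvariants

variable {V W : Type*}

lemma deg_eq_degree [Fintype V] (G : SimpleGraph V) [DecidableRel G.Adj] (v : V) :
    deg G v = G.degree v := by
  rw [deg, ← card_neighborSet_eq_degree, Nat.card_eq_fintype_card]

lemma Iso.deg_apply {G : SimpleGraph V} {H : SimpleGraph W} (f : G ≃g H) (v : V) :
    deg H (f v) = deg G v :=
  (Nat.card_congr (f.mapNeighborSet v)).symm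

lemma Iso.edgeCount_eq {G : SimpleGraph V} {H : SimpleGraph W} (f : G ≃g H) :
    edgeCount G = edgeCount H :=
  Nat.card_congr f.mapEdgeSet

lemma deg_sum_inl (G : SimpleGraph V) (H : SimpleGraph W) (v : V) :
    deg (G ⊕g H) (.inl v) = deg G v := by
  rw [deg, neighborSet_sum_inl, Nat.card_image_of_injective Sum.inl_injective, deg]

lemma deg_sum_inr (G : SimpleGraph V) (H : SimpleGraph W) (w : W) :
    deg (G ⊕g H) (.inr w) = deg H w := by
  rw [deg, neighborSet_sum_inr, Nat.card_image_of_injective Sum.inr_injective, deg]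

lemma edgeCount_sum [Finite V] [Finite W] (G : SimpleGraph V) (H : SimpleGraph W) :
    edgeCount (G ⊕g H) = edgeCount G + edgeCount H := by
  rw [edgeCount, Nat.card_congr edgeSetSumEquiv, Nat.card_sum, edgeCount, edgeCount]

lemma deg_completeBipartiteGraph_inl (v : V) :
    deg (completeBipartiteGraph V W) (.inl v) = Nat.card W := by
  have : (completeBipartiteGraph V W).neighborSet (.inl v) = Set.range Sum.inr := by
    ext (_ | _) <;> simp
  rw [deg, this, Nat.card_range_of_injective Sum.inr_injective]

lemma deg_completeBipartiteGraph_inr (w : W) :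
    deg (completeBipartiteGraph V W) (.inr w) = Nat.card V := by
  have : (completeBipartiteGraph V W).neighborSet (.inr w) = Set.range Sum.inl := by
    ext (_ | _) <;> simp
  rw [deg, this, Nat.card_range_of_injective Sum.inl_injective]

lemma edgeCount_completeBipartiteGraph [Finite V] [Finite W] :
    edgeCount (completeBipartiteGraph V W) = Nat.card V * Nat.card W := by
  rw [edgeCount, Nat.card_coe_set_eq, Set.ncard_def, encard_edgeSet_completeBipartiteGraph]
  simp [ENat.card_eq_coe_natCard]

end GraphInvariants

section Turan

variable {m s : ℕ}

lemma turanGraph_colorable (hs : 0 < s) : (turanGraph m s).Colorable s :=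
  ⟨Coloring.mk (fun v => ⟨v % s, Nat.mod_lt _ hs⟩) fun h => by
    simpa [Fin.ext_iff, turanGraph_adj] using h⟩

lemma compl_turanGraph_adj {v w : Fin m} :
    (turanGraph m s)ᶜ.Adj v w ↔ v ≠ w ∧ (v : ℕ) % s = w % s := by
  simp [turanGraph_adj]

lemma IsIndepSet.card_le_of_compl_turanGraph (hs : 0 < s) {t : Finset (Fin m)}
    (ht : (turanGraph m s)ᶜ.IsIndepSet t) : #t ≤ s :=
  ((isIndepSet_compl _).1 ht).card_le_of_colorable (turanGraph_colorable hs)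

lemma card_filter_mod_eq_le (a : ℕ) : #{w : Fin m | (w : ℕ) % s = a} ≤ m / s + 1 := by
  rw [← card_range (m / s + 1)]
  refine card_le_card_of_injOn (fun w => (w : ℕ) / s) (fun w _ => ?_) fun w hw u hu h => ?_
  · simpa [Nat.lt_succ_iff] using Nat.div_le_div_right w.is_lt.le
  · simp only [mem_coe, mem_filter, mem_univ, true_and] at hw hu
    exact Fin.ext (Nat.ext_div_mod h (hw.trans hu.symm))

lemma deg_compl_turanGraph_le (v : Fin m) : deg (turanGraph m s)ᶜ v ≤ m / s := by
  have hsub : (turanGraph m s)ᶜ.neighborFinset v ⊆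
      ({w | (w : ℕ) % s = v % s} : Finset (Fin m)).erase v := by
    intro w hw
    obtain ⟨hne, hmod⟩ := compl_turanGraph_adj.1 ((mem_neighborFinset _ _ _).1 hw)
    simp [hne.symm, hmod.symm]
  rw [deg_eq_degree, ← card_neighborFinset_eq_degree]
  calc _ ≤ #(({w | (w : ℕ) % s = v % s} : Finset (Fin m)).erase v) := card_le_card hsub
    _ = #{w : Fin m | (w : ℕ) % s = v % s} - 1 := card_erase_of_mem (by simp)
    _ ≤ m / s := Nat.sub_le_iff_le_add.2 (card_filter_mod_eq_le _)

end Turan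

section IndepSet

variable {V W : Type*} {G : SimpleGraph V} {H : SimpleGraph W}

lemma Iso.isIndepSet_map (f : G ≃g H) {t : Finset V} (ht : G.IsIndepSet t) :
    H.IsIndepSet (t.map f.toEquiv.toEmbedding) := by
  rw [coe_map]
  rintro _ ⟨a, ha, rfl⟩ _ ⟨b, hb, rfl⟩ hne hadj
  exact ht ha hb (fun h => hne (h ▸ rfl)) (f.map_adj_iff.1 hadj)

lemma IsIndepSet.sum_toLeft {t : Finset (V ⊕ W)} (ht : (G ⊕g H).IsIndepSet t) :
    G.IsIndepSet t.toLeft := fun a ha b hb hne hadj =>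
  ht (mem_toLeft.1 ha) (mem_toLeft.1 hb) (by simpa using hne) (by simpa using hadj)

lemma IsIndepSet.sum_toRight {t : Finset (V ⊕ W)} (ht : (G ⊕g H).IsIndepSet t) :
    H.IsIndepSet t.toRight := fun a ha b hb hne hadj =>
  ht (mem_toRight.1 ha) (mem_toRight.1 hb) (by simpa using hne) (by simpa using hadj)

lemma IsIndepSet.card_le_of_inl_mem [Fintype V] {u : Finset (V ⊕ W)} {v : V}
    (hu : (completeBipartiteGraph V W).IsIndepSet u) (hv : .inl v ∈ u) :
    #u ≤ Fintype.card V := by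
  have : u.toRight = ∅ := eq_empty_of_forall_notMem fun w hw =>
    hu hv (mem_toRight.1 hw) (by simp) (by simp)
  rw [← card_toLeft_add_card_toRight, this, card_empty, add_zero]
  exact card_le_univ _

end IndepSet

def starSumComplTuran (D m s : ℕ) : SimpleGraph ((Unit ⊕ Fin D) ⊕ Fin m) :=
  completeBipartiteGraph Unit (Fin D) ⊕g (turanGraph m s)ᶜ

section StarSumComplTuran

variable {D m s : ℕ}

lemma deg_starSumComplTuran_center : deg (starSumComplTuran D m s) (.inl (.inl ())) = D := by
  rw [starSumComplTuran, deg_sum_inl, deg_completeBipartiteGraph_inl, Nat.card_eq_fintype_card,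
    Fintype.card_fin]

lemma deg_starSumComplTuran_le (hD : 1 ≤ D) (hmD : m / s ≤ D) (v : (Unit ⊕ Fin D) ⊕ Fin m) :
    deg (starSumComplTuran D m s) v ≤ D := by
  rcases v with (⟨⟩ | b) | z
  · rw [deg_starSumComplTuran_center]
  · rw [starSumComplTuran, deg_sum_inl, deg_completeBipartiteGraph_inr, Nat.card_unique]
    exact hD
  · rw [starSumComplTuran, deg_sum_inr]
    exact (deg_compl_turanGraph_le z).trans hmD

lemma edgeCount_starSumComplTuran :
    edgeCount (starSumComplTuran D m s) = D + edgeCount (turanGraph m s)ᶜ := by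
  rw [starSumComplTuran, edgeCount_sum, edgeCount_completeBipartiteGraph]
  simp

lemma IsIndepSet.card_le_of_center_mem (hs : 0 < s) {t : Finset ((Unit ⊕ Fin D) ⊕ Fin m)}
    (ht : (starSumComplTuran D m s).IsIndepSet t) (hc : .inl (.inl ()) ∈ t) : #t ≤ s + 1 := by
  rw [← card_toLeft_add_card_toRight, add_comm]
  refine add_le_add (ht.sum_toRight.card_le_of_compl_turanGraph hs) ?_
  simpa using ht.sum_toLeft.card_le_of_inl_mem (mem_toLeft.2 hc)

end StarSumComplTuran

end SimpleGraph

open SimpleGraph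

/-- Let `r ≥ 3` and `n = k r` with `k ≥ 2`, and let `n/(r-1) ≤ D ≤ n - r` (the lower bound
written multiplicatively as `n ≤ D (r-1)`). There is a graph `G₂` on `n` vertices with
maximum degree exactly `D` and exactly `D + e(T̄(n-D-1, r-2))` edges which has no equitable
`n/r`-colouring. -/
theorem stmt6 (n r D : ℕ) (hr : 3 ≤ r) (hk : ∃ k : ℕ, 2 ≤ k ∧ n = k * r)
    (hD1 : n ≤ D * (r - 1)) (hD2 : D ≤ n - r) :
    ∃ G₂ : SimpleGraph (Fin n),
      (∀ v, deg G₂ v ≤ D) ∧ (∃ v, deg G₂ v = D) ∧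
      edgeCount G₂ = D + edgeCount ((SimpleGraph.turanGraph (n - D - 1) (r - 2))ᶜ) ∧
      ¬ HasEquitableColoring G₂ (n / r) := by
  obtain ⟨k, hk, rfl⟩ := hk
  have hD : 1 ≤ D := Nat.pos_of_ne_zero (by
    rintro rfl; rw [zero_mul, Nat.le_zero, mul_eq_zero] at hD1; omega)
  have hmD : (k * r - D - 1) / (r - 2) ≤ D := by
    refine Nat.div_le_of_le_mul ?_
    have : D * (r - 1) = (r - 2) * D + D := by
      rw [show r - 1 = r - 2 + 1 by omega]; ring
    omega
  let e : Fin (k * r) ≃ (Unit ⊕ Fin D) ⊕ Fin (k * r - D - 1) :=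
    Fintype.equivOfCardEq (by
      simp only [Fintype.card_sum, Fintype.card_unit, Fintype.card_fin]; omega)
  let f := Iso.comap e (starSumComplTuran D (k * r - D - 1) (r - 2))
  refine ⟨(starSumComplTuran D (k * r - D - 1) (r - 2)).comap e, fun v => ?_,
    ⟨e.symm (.inl (.inl ())), ?_⟩, ?_, fun h => ?_⟩
  · rw [← f.deg_apply]; exact deg_starSumComplTuran_le hD hmD _
  · rw [← f.deg_apply, Iso.comap_apply, e.apply_symm_apply, deg_starSumComplTuran_center]
  · rw [f.edgeCount_eq, edgeCount_starSumComplTuran]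
  · obtain ⟨t, hvt, ht, hrt⟩ :=
      h.exists_isIndepSet (Nat.div_mul_cancel (dvd_mul_left r k)).symm (e.symm (.inl (.inl ())))
    have hcard := (f.isIndepSet_map ht).card_le_of_center_mem (by omega) (mem_map_equiv.2 hvt)
    rw [card_map] at hcard
    omega
end

section
/- Let n, r ∈ ℕ with r ≥ 3 and r dividing n, where n ≥ 2r. Suppose D ∈ ℕ satisfies n/r ≤ D ≤ n/(r−1). Then min{ C(n/r+1, 2), D + e(\overline{T}(n−D−1, r−2)) } = C(n/r+1, 2); equivalently, C(n/r+1, 2) ≤ D + e(\overline{T}(n−D−1, r−2)). -/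
namespace SimpleGraph

theorem edgeCount_top {V : Type*} [Fintype V] :
    edgeCount (⊤ : SimpleGraph V) = (Fintype.card V).choose 2 := by
  classical
  rw [edgeCount, Nat.card_eq_fintype_card, card_edgeSet, card_edgeFinset_top_eq_card_choose_two]

theorem IsContained.edgeCount_le {V W : Type*} {G : SimpleGraph V} {H : SimpleGraph W}
    [Finite H.edgeSet] (h : G ⊑ H) : edgeCount G ≤ edgeCount H :=
  let ⟨f⟩ := h
  Nat.card_le_card_of_injective f.mapEdgeSet f.mapEdgeSet.injective

theorem top_isContained_compl_turanGraph {m k q : ℕ} (hk : 0 < k) (hm : q * k ≤ m) :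
    (⊤ : SimpleGraph (Fin q)) ⊑ (turanGraph m k)ᶜ := by
  have hinj : Function.Injective fun i : Fin q ↦ (⟨i * k, by nlinarith [i.isLt]⟩ : Fin m) :=
    fun i j hij ↦ Fin.ext (Nat.eq_of_mul_eq_mul_right hk (Fin.mk.inj_iff.mp hij))
  refine ⟨⟨⟨_, fun {i j} hij ↦ ?_⟩, hinj⟩⟩
  rw [compl_adj, turanGraph_adj]
  exact ⟨hinj.ne hij, by simp⟩

theorem choose_two_le_edgeCount_compl_turanGraph {m k q : ℕ} (hk : 0 < k) (hm : q * k ≤ m) :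
    q.choose 2 ≤ edgeCount (turanGraph m k)ᶜ := by
  simpa [edgeCount_top] using (top_isContained_compl_turanGraph hk hm).edgeCount_le

end SimpleGraph

theorem mul_sub_two_le_of_mul_sub_one_le {q r D : ℕ} (hr : 3 ≤ r) (hD : D * (r - 1) ≤ q * r) :
    q * (r - 2) ≤ q * r - D - 1 := by
  obtain ⟨s, rfl⟩ : ∃ s, r = s + 3 := ⟨r - 3, by omega⟩
  rw [show s + 3 - 1 = s + 2 by omega] at hD
  rw [show s + 3 - 2 = s + 1 by omega]
  rcases Nat.eq_zero_or_pos q with rfl | hq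
  · simp
  have hD2q : D < 2 * q := by
    by_contra! h
    have : 2 * q * (s + 2) ≤ D * (s + 2) := Nat.mul_le_mul_right _ h
    nlinarith
  have : q * (s + 3) = q * (s + 1) + 2 * q := by ring
  omega

theorem stmt7_general (n r D : ℕ) (hr : 3 ≤ r) (hdvd : r ∣ n)
    (hD1 : n / r ≤ D) (hD2 : D * (r - 1) ≤ n) :
    min (Nat.choose (n / r + 1) 2)
        (D + edgeCount ((SimpleGraph.turanGraph (n - D - 1) (r - 2))ᶜ)) =
      Nat.choose (n / r + 1) 2 ∧
    Nat.choose (n / r + 1) 2 ≤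
      D + edgeCount ((SimpleGraph.turanGraph (n - D - 1) (r - 2))ᶜ) := by
  obtain ⟨q, rfl⟩ := hdvd
  rw [Nat.mul_div_cancel_left q (by omega)] at hD1 ⊢
  rw [mul_comm r q] at hD2 ⊢
  have hclique : q.choose 2 ≤ edgeCount (SimpleGraph.turanGraph (q * r - D - 1) (r - 2))ᶜ :=
    SimpleGraph.choose_two_le_edgeCount_compl_turanGraph (by omega)
      (mul_sub_two_le_of_mul_sub_one_le hr hD2)
  have hbound : (q + 1).choose 2 ≤
      D + edgeCount (SimpleGraph.turanGraph (q * r - D - 1) (r - 2))ᶜ := by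
    rw [Nat.choose_succ_succ', Nat.choose_one_right]
    exact Nat.add_le_add hD1 hclique
  exact ⟨min_eq_left hbound, hbound⟩

/-- Let `r ≥ 3` divide `n` with `n ≥ 2r`, and let `n/r ≤ D ≤ n/(r-1)` (the upper bound
written multiplicatively as `D (r-1) ≤ n`). Then
`min { C(n/r+1, 2), D + e(T̄(n-D-1, r-2)) } = C(n/r+1, 2)`; equivalently,
`C(n/r+1, 2) ≤ D + e(T̄(n-D-1, r-2))`. -/
theorem stmt7 (n r D : ℕ) (hr : 3 ≤ r) (hdvd : r ∣ n) (hn : 2 * r ≤ n)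
    (hD1 : n / r ≤ D) (hD2 : D * (r - 1) ≤ n) :
    min (Nat.choose (n / r + 1) 2)
        (D + edgeCount ((SimpleGraph.turanGraph (n - D - 1) (r - 2))ᶜ)) =
      Nat.choose (n / r + 1) 2 ∧
    Nat.choose (n / r + 1) 2 ≤
      D + edgeCount ((SimpleGraph.turanGraph (n - D - 1) (r - 2))ᶜ) :=
  stmt7_general n r D hr hdvd hD1 hD2
end

section
/- Let n, r ∈ ℕ with r ≥ 4 and r dividing n, where n ≥ 3r. Suppose D ∈ ℕ satisfies n/r ≤ D < (n+r)/(r−1). Then min{ C(n/r+1, 2), D + e(\overline{T}(n−D−1, r−2)) } = C(n/r+1, 2); equivalently, C(n/r+1, 2) ≤ D + e(\overline{T}(n−D−1, r−2)). -/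
open SimpleGraph

lemma edgeCount_top_fin (k : ℕ) : edgeCount (⊤ : SimpleGraph (Fin k)) = k.choose 2 := by
  rw [edgeCount, Nat.card_eq_fintype_card, card_edgeSet, card_edgeFinset_top_eq_card_choose_two,
    Fintype.card_fin]

lemma edgeCount_le_of_copy {V W : Type*} [Finite W] {G : SimpleGraph V} {H : SimpleGraph W}
    (f : Copy G H) : edgeCount G ≤ edgeCount H :=
  Nat.card_le_card_of_injective f.mapEdgeSet f.mapEdgeSet.injective

def topCopyComplTuranGraph {k m s : ℕ} (hs : 0 < s) (hk : k * s < m + s) :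
    Copy (⊤ : SimpleGraph (Fin k)) (turanGraph m s)ᶜ where
  toHom.toFun i := ⟨i * s, by nlinarith [i.isLt]⟩
  toHom.map_rel' {i j} hij := by
    simpa only [compl_adj, turanGraph_adj, Nat.mul_mod_left, ne_eq, not_true_eq_false,
      not_false_eq_true, and_true, top_adj, Fin.mk.injEq, Nat.mul_left_inj hs.ne', Fin.val_inj]
      using hij
  injective' _ _ hij := Fin.ext (Nat.eq_of_mul_eq_mul_right hs (Fin.val_eq_of_eq hij))

lemma choose_two_le_edgeCount_compl_turanGraph {k m s : ℕ} (hs : 0 < s) (hk : k * s < m + s) :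
    k.choose 2 ≤ edgeCount (turanGraph m s)ᶜ :=
  edgeCount_top_fin k ▸ edgeCount_le_of_copy (topCopyComplTuranGraph hs hk)

lemma div_mul_sub_two_lt_sub_sub_one_add_sub_two {n r D : ℕ} (hr : 4 ≤ r) (hD1 : n / r ≤ D)
    (hD2 : D * (r - 1) < n + r) : n / r * (r - 2) < n - D - 1 + (r - 2) := by
  obtain ⟨s, rfl⟩ : ∃ s, r = s + 2 := ⟨r - 2, by omega⟩
  have hn := Nat.div_add_mod n (s + 2)
  have ht := Nat.mod_lt n (show s + 2 > 0 by omega)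
  rw [show s + 2 - 1 = s + 1 by omega] at hD2
  rw [Nat.add_sub_cancel]
  generalize n / (s + 2) = k at *
  generalize n % (s + 2) = t at *
  rcases Nat.eq_zero_or_pos k with rfl | hk
  · omega
  · have : D + 1 + k * s < n + s := by nlinarith
    omega

theorem stmt8_general (n r D : ℕ) (hr : 4 ≤ r)
    (hD1 : n / r ≤ D) (hD2 : D * (r - 1) < n + r) :
    min (Nat.choose (n / r + 1) 2)
        (D + edgeCount ((SimpleGraph.turanGraph (n - D - 1) (r - 2))ᶜ)) =
      Nat.choose (n / r + 1) 2 ∧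
    Nat.choose (n / r + 1) 2 ≤
      D + edgeCount ((SimpleGraph.turanGraph (n - D - 1) (r - 2))ᶜ) := by
  have hbound : (n / r + 1).choose 2 ≤ D + edgeCount (turanGraph (n - D - 1) (r - 2))ᶜ := by
    rw [Nat.choose_succ_succ', Nat.choose_one_right]
    exact Nat.add_le_add hD1 (choose_two_le_edgeCount_compl_turanGraph (by omega)
      (div_mul_sub_two_lt_sub_sub_one_add_sub_two hr hD1 hD2))
  exact ⟨min_eq_left hbound, hbound⟩

/-- Let `r ≥ 4` divide `n` with `n ≥ 3r`, and let `n/r ≤ D < (n+r)/(r-1)` (the upper bound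
written multiplicatively as `D (r-1) < n + r`). Then
`min { C(n/r+1, 2), D + e(T̄(n-D-1, r-2)) } = C(n/r+1, 2)`; equivalently,
`C(n/r+1, 2) ≤ D + e(T̄(n-D-1, r-2))`. -/
theorem stmt8 (n r D : ℕ) (hr : 4 ≤ r) (hdvd : r ∣ n) (hn : 3 * r ≤ n)
    (hD1 : n / r ≤ D) (hD2 : D * (r - 1) < n + r) :
    min (Nat.choose (n / r + 1) 2)
        (D + edgeCount ((SimpleGraph.turanGraph (n - D - 1) (r - 2))ᶜ)) =
      Nat.choose (n / r + 1) 2 ∧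
    Nat.choose (n / r + 1) 2 ≤
      D + edgeCount ((SimpleGraph.turanGraph (n - D - 1) (r - 2))ᶜ) :=
  stmt8_general n r D hr hD1 hD2
end

section
/- Let n, r, k ∈ ℕ with r ≥ 2, r dividing n, and 1 ≤ k < n/r. Then there exists a graph G on n vertices whose degree sequence d_1 ≤ ⋯ ≤ d_n satisfies: d_i = (r−2)n/r + k − 1 for all 1 ≤ i ≤ k; d_i = (r−1)n/r for all k+1 ≤ i ≤ (r−2)n/r + k; d_i = n − k − 1 for all (r−2)n/r + k + 1 ≤ i ≤ n − k + 1; and d_i = n − 1 for all n − k + 2 ≤ i ≤ n; but G contains no perfect K_r-packing. -/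
/-- A perfect `K_r`-packing: a collection of vertex-disjoint `r`-cliques covering all vertices. -/
def HasPerfectKrPacking {n : ℕ} (G : SimpleGraph (Fin n)) (r : ℕ) : Prop :=
  ∃ P : Finset (Finset (Fin n)),
    (∀ p ∈ P, p.card = r ∧ G.IsClique (p : Set (Fin n))) ∧
    (P : Set (Finset (Fin n))).PairwiseDisjoint id ∧
    P.biUnion id = Finset.univ

open Finset

lemma deg_eq_sub_card_of_not_adj_iff {n : ℕ} {G : SimpleGraph (Fin n)} [DecidableRel G.Adj]
    {v : Fin n} {S : Finset ℕ} (hSn : S ⊆ range n)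
    (hS : ∀ w : Fin n, ¬ G.Adj v w ↔ (w : ℕ) ∈ S) :
    deg G v = n - #S := by
  have hmap : ({w | ¬ G.Adj v w} : Finset (Fin n)).map Fin.valEmbedding = S := by
    ext x
    simp only [mem_map, mem_filter, mem_univ, true_and, Fin.valEmbedding_apply]
    constructor
    · rintro ⟨w, hw, rfl⟩
      exact (hS w).1 hw
    · intro hx
      exact ⟨⟨x, mem_range.1 (hSn hx)⟩, (hS _).2 hx, rfl⟩
  have hsplit := card_filter_add_card_filter_not (s := (univ : Finset (Fin n))) (G.Adj v)
  rw [card_univ, Fintype.card_fin] at hsplit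
  rw [← hmap, card_map, deg, Nat.card_eq_fintype_card, SimpleGraph.card_neighborSet_eq_degree,
    ← SimpleGraph.card_neighborFinset_eq_degree, SimpleGraph.neighborFinset_eq_filter]
  exact Nat.eq_sub_of_add_eq hsplit

theorem not_hasPerfectKrPacking_of_isIndepSet_of_card_lt {n r : ℕ} {G : SimpleGraph (Fin n)}
    {A D : Finset (Fin n)} (hA : G.IsIndepSet A)
    (hD : ∀ p : Finset (Fin n), G.IsNClique r p → ∀ a ∈ A, a ∈ p → ∃ d ∈ D, d ∈ p)
    (hcard : #D < #A) : ¬ HasPerfectKrPacking G r := by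
  rintro ⟨P, hclique, hdisj, hcover⟩
  have hcovered : ∀ a, ∃ p ∈ P, a ∈ p := fun a => by
    simpa using (Finset.ext_iff.1 hcover a).2 (mem_univ a)
  choose! p hpP hap using hcovered
  have hnclique : ∀ a, G.IsNClique r (p a) := fun a =>
    ⟨(hclique _ (hpP a)).2, (hclique _ (hpP a)).1⟩
  choose! f hfD hfp using fun a ha => hD (p a) (hnclique a) a ha (hap a)
  refine hcard.not_ge (card_le_card_of_injOn f (fun a ha => hfD a ha) fun a ha b hb hab => ?_)
  have hpab : p a = p b := by
    by_contra hne
    exact disjoint_left.1 (hdisj (hpP a) (hpP b) hne) (hfp a ha) (hab ▸ hfp b hb)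
  by_contra hne
  exact hA ha hb hne ((hnclique a).isClique (hap a) (hpab ▸ hap b) hne)

/-- The vertices `0, …, n-1` fall into consecutive intervals `A = [0, k)`, `B = [k, k + t m)`
(cut into `t` blocks of `m` vertices), `C = [k + t m, n - k]` and `D = (n - k, n)`. The graph is
complete except that `A` and each block of `B` are independent and there are no `A`–`C` edges.
With `n = (t + 2) m` the zones are listed in order of increasing degree. -/
def obstructionGraph (n k m t : ℕ) : SimpleGraph (Fin n) where
  Adj i j := i ≠ j ∧ ¬ ((i : ℕ) < k ∧ (j : ℕ) < k) ∧
    ¬ ((i : ℕ) < k ∧ k + t * m ≤ j ∧ (j : ℕ) ≤ n - k) ∧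
    ¬ ((j : ℕ) < k ∧ k + t * m ≤ i ∧ (i : ℕ) ≤ n - k) ∧
    ¬ (k ≤ (i : ℕ) ∧ (i : ℕ) < k + t * m ∧ k ≤ (j : ℕ) ∧ (j : ℕ) < k + t * m ∧
      ((i : ℕ) - k) / m = ((j : ℕ) - k) / m)
  symm := ⟨fun i j h => by omega⟩
  loopless := ⟨fun i h => h.1 rfl⟩

namespace obstructionGraph

instance (n k m t : ℕ) : DecidableRel (obstructionGraph n k m t).Adj := fun _ _ => by
  unfold obstructionGraph; infer_instance

variable {n k m t : ℕ}

lemma deg_eq_of_mem_block (hn : n = (t + 2) * m) (hkm : k ≤ m) {v : Fin n} (hkv : k ≤ (v : ℕ))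
    (hvB : (v : ℕ) < k + t * m) : deg (obstructionGraph n k m t) v = t * m + m := by
  have hm : 0 < m := Nat.pos_of_ne_zero fun hm => by rw [hm, mul_zero] at hvB; omega
  obtain ⟨q, hq⟩ : ∃ q, ((v : ℕ) - k) / m = q := ⟨_, rfl⟩
  have hqv := (Nat.div_eq_iff hm).1 hq
  have hqt : q * m + m ≤ t * m := by
    rw [← add_one_mul]
    exact Nat.mul_le_mul_right m (hq ▸ (Nat.div_lt_iff_lt_mul hm).2 (by omega))
  have hn' : n = t * m + 2 * m := by rw [hn]; ring
  rw [deg_eq_sub_card_of_not_adj_iff (S := Ico (k + q * m) (k + q * m + m))]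
  · simp only [Nat.card_Ico]
    omega
  · intro x
    simp only [mem_Ico, mem_range]
    omega
  · intro w
    simp only [obstructionGraph, ne_eq, Fin.ext_iff, mem_Ico]
    rw [hq, @eq_comm _ q, Nat.div_eq_iff hm]
    omega

lemma deg_eq (hn : n = (t + 2) * m) (hkm : k ≤ m) (v : Fin n) :
    deg (obstructionGraph n k m t) v =
      if (v : ℕ) < k then t * m + k - 1
      else if (v : ℕ) < k + t * m then t * m + m
      else if (v : ℕ) ≤ n - k then n - k - 1
      else n - 1 := by
  have hn' : n = t * m + 2 * m := by rw [hn]; ring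
  split_ifs with hA hB hC
  · rw [deg_eq_sub_card_of_not_adj_iff (S := range k ∪ Icc (k + t * m) (n - k))]
    · rw [card_union_of_disjoint (disjoint_left.2 fun x hx hx' => by
        simp only [mem_range, mem_Icc] at hx hx'; omega),
        card_range, Nat.card_Icc]
      omega
    · intro x
      simp only [mem_union, mem_range, mem_Icc]
      omega
    · intro w
      simp only [obstructionGraph, ne_eq, Fin.ext_iff, mem_union, mem_range, mem_Icc]
      omega
  · exact deg_eq_of_mem_block hn hkm (by omega) hB
  · rw [deg_eq_sub_card_of_not_adj_iff (S := insert (v : ℕ) (range k)),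
      card_insert_of_notMem (by rw [mem_range]; omega), card_range]
    · omega
    · intro x
      simp only [mem_insert, mem_range]
      omega
    · intro w
      simp only [obstructionGraph, ne_eq, Fin.ext_iff, mem_insert, mem_range]
      omega
  · rw [deg_eq_sub_card_of_not_adj_iff (S := {(v : ℕ)}), card_singleton]
    · simp
    · intro w
      simp only [obstructionGraph, ne_eq, Fin.ext_iff, mem_singleton]
      omega

lemma exists_gt_of_isNClique {p : Finset (Fin n)}
    (hp : (obstructionGraph n k m t).IsNClique (t + 2) p) {a : Fin n} (ha : (a : ℕ) < k)
    (hap : a ∈ p) : ∃ d ∈ p, n - k < (d : ℕ) := by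
  by_contra! hpC
  have hB : ∀ w ∈ p.erase a, k ≤ (w : ℕ) ∧ (w : ℕ) < k + t * m := fun w hw => by
    have hadj := hp.isClique hap (mem_of_mem_erase hw) (ne_of_mem_erase hw).symm
    have := hpC w (mem_of_mem_erase hw)
    simp only [obstructionGraph] at hadj
    omega
  have hcard : #(p.erase a) ≤ #(range t) := by
    refine card_le_card_of_injOn (fun w => ((w : ℕ) - k) / m) (fun w hw => ?_)
      fun w hw w' hw' hblock => ?_
    · have := hB w hw
      simpa using Nat.div_lt_of_lt_mul (by rw [mul_comm]; omega)
    · by_contra hne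
      have hadj := hp.isClique (mem_of_mem_erase hw) (mem_of_mem_erase hw') hne
      simp only [obstructionGraph] at hadj
      have := hB w hw
      have := hB w' hw'
      exact hadj.2.2.2.2 ⟨by omega, by omega, by omega, by omega, hblock⟩
  rw [card_erase_of_mem hap, hp.card_eq, card_range] at hcard
  omega

theorem not_hasPerfectKrPacking (hk : 1 ≤ k) (hkn : k < n) :
    ¬ HasPerfectKrPacking (obstructionGraph n k m t) (t + 2) := by
  refine not_hasPerfectKrPacking_of_isIndepSet_of_card_lt (A := Iio ⟨k, hkn⟩)
    (D := Ioi ⟨n - k, by omega⟩) (fun a ha b hb _ hadj => ?_) (fun p hp a ha hap => ?_) ?_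
  · simp only [coe_Iio, Set.mem_Iio, Fin.lt_def] at ha hb
    exact hadj.2.1 ⟨ha, hb⟩
  · obtain ⟨d, hdp, hd⟩ := exists_gt_of_isNClique hp (by simpa [Fin.lt_def] using ha) hap
    exact ⟨d, by simpa [Fin.lt_def] using hd, hdp⟩
  · simp only [Fin.card_Iio, Fin.card_Ioi]
    omega

end obstructionGraph

/-- Let `r ≥ 2` divide `n` and `1 ≤ k < n/r`. There is a graph `G` on `n` vertices whose
nondecreasing degree sequence `d` (realised via a permutation `σ` of the vertices, 1-based:
`d_i = d ⟨i-1⟩`) satisfies `d_i = (r-2)n/r + k - 1` for `1 ≤ i ≤ k`, `d_i = (r-1)n/r` for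
`k+1 ≤ i ≤ (r-2)n/r + k`, `d_i = n - k - 1` for `(r-2)n/r + k + 1 ≤ i ≤ n - k + 1`, and
`d_i = n - 1` for `n - k + 2 ≤ i ≤ n`, but `G` has no perfect `K_r`-packing. -/
theorem stmt11 (n r k : ℕ) (hr : 2 ≤ r) (hdvd : r ∣ n) (hk1 : 1 ≤ k) (hk2 : k < n / r) :
    ∃ (G : SimpleGraph (Fin n)) (d : Fin n → ℕ) (σ : Equiv.Perm (Fin n)),
      Monotone d ∧ (∀ i, d i = deg G (σ i)) ∧
      (∀ i : Fin n,
        ((i : ℕ) + 1 ≤ k → d i = (r - 2) * (n / r) + k - 1) ∧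
        (k + 1 ≤ (i : ℕ) + 1 ∧ (i : ℕ) + 1 ≤ (r - 2) * (n / r) + k →
          d i = (r - 1) * (n / r)) ∧
        ((r - 2) * (n / r) + k + 1 ≤ (i : ℕ) + 1 ∧ (i : ℕ) + 1 ≤ n - k + 1 →
          d i = n - k - 1) ∧
        (n - k + 2 ≤ (i : ℕ) + 1 → d i = n - 1)) ∧
      ¬ HasPerfectKrPacking G r := by
  obtain ⟨m, rfl⟩ := hdvd
  obtain ⟨t, rfl⟩ : ∃ t, r = t + 2 := ⟨r - 2, by omega⟩
  rw [Nat.mul_div_cancel_left m (by omega)] at hk2 ⊢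
  have hn : (t + 2) * m = t * m + 2 * m := by ring
  have hdeg := obstructionGraph.deg_eq (k := k) (t := t) rfl hk2.le
  refine ⟨obstructionGraph _ k m t, deg (obstructionGraph _ k m t), Equiv.refl _,
    fun i j hij => ?_, fun i => rfl, fun i => ?_,
    obstructionGraph.not_hasPerfectKrPacking hk1 (by omega)⟩
  · rw [Fin.le_def] at hij
    rw [hdeg, hdeg]
    split_ifs <;> omega
  · rw [hdeg, show t + 2 - 1 = t + 1 by omega, add_one_mul, Nat.add_sub_cancel]
    split_ifs <;> omega
end

section
/- Let n, r, k ∈ ℕ with r ≥ 2, r dividing n, and 1 ≤ k ≤ n/r. Then there exists a graph G on n vertices whose degree sequence d_1 ≤ ⋯ ≤ d_n satisfies d_{n−i(r−1)+1} ≥ n − i for all i ∈ {1, …, n/r} \ {k}, and d_{n−k(r−1)+1} = n − k − 1, but G contains no perfect K_r-packing. -/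
open Finset

lemma Fin.card_filter_le_val (n m : ℕ) : #{i : Fin n | m ≤ (i : ℕ)} = n - m := by
  have h := card_filter_add_card_filter_not (s := univ) fun i : Fin n => (i : ℕ) < m
  simp only [not_lt, card_univ, Fintype.card_fin, Fin.card_filter_val_lt] at h
  omega

lemma deg_eq_card_of_neighborSet_eq {V : Type*} {G : SimpleGraph V} {v : V} {s : Finset V}
    (h : G.neighborSet v = s) : deg G v = #s := by
  rw [deg, h, Nat.card_coe_set_eq, Set.ncard_coe_finset]

def lowHighGraph {V : Type*} (L A : Finset V) : SimpleGraph V where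
  Adj x y := x ≠ y ∧ (x ∈ L → y ∈ A) ∧ (y ∈ L → x ∈ A)
  symm := ⟨fun _ _ ⟨hne, hxy, hyx⟩ => ⟨hne.symm, hyx, hxy⟩⟩
  loopless := ⟨fun _ h => h.1 rfl⟩

lemma deg_lowHighGraph {V : Type*} [Fintype V] [DecidableEq V] {L A : Finset V}
    (hLA : Disjoint L A) (v : V) :
    deg (lowHighGraph L A) v =
      if v ∈ L then #A else if v ∈ A then Fintype.card V - 1 else Fintype.card V - #L - 1 := by
  have hL : ∀ {x}, x ∈ L → x ∉ A := fun hx => disjoint_left.1 hLA hx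
  split_ifs with hvL hvA
  · refine deg_eq_card_of_neighborSet_eq (Set.ext fun y => ?_)
    simp only [SimpleGraph.mem_neighborSet, lowHighGraph, mem_coe]
    grind
  · rw [deg_eq_card_of_neighborSet_eq (s := univ.erase v), card_erase_of_mem (mem_univ v),
      card_univ]
    ext y
    simp only [SimpleGraph.mem_neighborSet, lowHighGraph, coe_erase, coe_univ]
    grind
  · rw [deg_eq_card_of_neighborSet_eq (s := Lᶜ.erase v), card_erase_of_mem (by simpa),
      card_compl]
    ext y
    simp only [SimpleGraph.mem_neighborSet, lowHighGraph, coe_erase, coe_compl]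
    grind

lemma card_mul_le_of_hasPerfectKrPacking {n r : ℕ} {G : SimpleGraph (Fin n)}
    (hG : HasPerfectKrPacking G r) {L A : Finset (Fin n)} (hLA : Disjoint L A)
    (hNA : ∀ x ∈ L, ∀ y, G.Adj x y → y ∈ A) : #L * (r - 1) ≤ #A := by
  obtain ⟨P, hclique, hdisj, hcover⟩ := hG
  have hmem : ∀ x, ∃ p ∈ P, x ∈ p := by simpa [eq_univ_iff_forall] using hcover
  choose p hpP hxp using hmem
  have hsub : ∀ x ∈ L, (p x).erase x ⊆ A := fun x hx y hy =>
    hNA x hx y ((hclique _ (hpP x)).2 (hxp x) (mem_of_mem_erase hy) (ne_of_mem_erase hy).symm)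
  have hdisjoint : (L : Set (Fin n)).PairwiseDisjoint fun x => (p x).erase x := by
    intro x hx y hy hxy
    have hpxy : p x ≠ p y := fun h =>
      disjoint_left.1 hLA hy (hNA x hx y ((hclique _ (hpP x)).2 (hxp x) (h ▸ hxp y) hxy))
    exact (hdisj (hpP x) (hpP y) hpxy).mono (erase_subset _ _) (erase_subset _ _)
  calc #L * (r - 1) = ∑ x ∈ L, #((p x).erase x) := by
        rw [sum_congr rfl fun x _ => by rw [card_erase_of_mem (hxp x), (hclique _ (hpP x)).1],
          sum_const, smul_eq_mul]
    _ = #(L.biUnion fun x => (p x).erase x) := (card_biUnion hdisjoint).symm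
    _ ≤ #A := card_le_card (biUnion_subset.2 hsub)

lemma deg_lowHighGraph_fin {n k m : ℕ} (hkm : k ≤ m) (hkn : k ≤ n) (v : Fin n) :
    deg (lowHighGraph {i : Fin n | (i : ℕ) < k} {i | m ≤ (i : ℕ)}) v =
      if (v : ℕ) < k then n - m else if m ≤ (v : ℕ) then n - 1 else n - k - 1 := by
  rw [deg_lowHighGraph (disjoint_filter.2 fun _ _ _ => by omega)]
  simp only [mem_filter, mem_univ, true_and, Fin.card_filter_le_val, Fin.card_filter_val_lt,
    Fintype.card_fin, min_eq_right hkn]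

theorem stmt12_general (n r k : ℕ) (hr : 2 ≤ r) (hk1 : 1 ≤ k) (hk2 : k ≤ n / r) :
    ∃ (G : SimpleGraph (Fin n)) (d : Fin n → ℕ) (σ : Equiv.Perm (Fin n)),
      Monotone d ∧ (∀ i, d i = deg G (σ i)) ∧
      (∀ i : ℕ, 1 ≤ i → i ≤ n / r → i ≠ k →
        ∀ j : Fin n, (j : ℕ) = n - i * (r - 1) → n - i ≤ d j) ∧
      (∀ j : Fin n, (j : ℕ) = n - k * (r - 1) → d j = n - k - 1) ∧
      ¬ HasPerfectKrPacking G r := by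
  have hr0 : 0 < r := by omega
  have hfit : ∀ i ≤ n / r, i * (r - 1) + i ≤ n := fun i hi => by
    have := (Nat.le_div_iff_mul_le hr0).1 hi
    rw [Nat.mul_sub_one, Nat.sub_add_cancel (Nat.le_mul_of_pos_right i hr0)]
    exact this
  have hkfit := hfit k hk2
  have hc : 0 < k * (r - 1) := Nat.mul_pos hk1 (by omega)
  set m := n - k * (r - 1) + 1 with hm
  set G := lowHighGraph {i : Fin n | (i : ℕ) < k} {i | m ≤ (i : ℕ)}
  have hdeg := deg_lowHighGraph_fin (n := n) (show k ≤ m by omega) (by omega)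
  refine ⟨G, deg G, Equiv.refl _, fun u v huv => ?_, fun _ => rfl, ?_, fun j hj => ?_,
    fun hP => ?_⟩
  · have huv' : (u : ℕ) ≤ v := huv
    rw [hdeg, hdeg]
    split_ifs <;> omega
  · intro i _ hi hik j hj
    rw [hdeg]
    rcases hik.lt_or_gt with hlt | hgt
    · have hik' := Nat.mul_le_mul_right (r - 1) (Nat.succ_le_of_lt hlt)
      rw [Nat.succ_mul] at hik'
      split_ifs <;> omega
    · have hki := Nat.mul_le_mul_right (r - 1) hgt.le
      have hifit := hfit i hi
      split_ifs <;> omega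
  · rw [hdeg]
    split_ifs <;> omega
  · have hA := card_mul_le_of_hasPerfectKrPacking hP (disjoint_filter.2 fun _ _ _ => by omega)
      fun x hx y hxy => hxy.2.1 hx
    rw [Fin.card_filter_val_lt, Fin.card_filter_le_val, min_eq_right (by omega)] at hA
    omega

/-- Let `r ≥ 2` divide `n` and `1 ≤ k ≤ n/r`. There is a graph `G` on `n` vertices whose
nondecreasing degree sequence `d` (realised via a permutation `σ` of the vertices, 1-based:
`d_m = d ⟨m-1⟩`) satisfies `d_{n - i(r-1) + 1} ≥ n - i` for all `i ∈ {1,…,n/r} \ {k}` and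
`d_{n - k(r-1) + 1} = n - k - 1`, but `G` has no perfect `K_r`-packing. -/
theorem stmt12 (n r k : ℕ) (hr : 2 ≤ r) (hdvd : r ∣ n) (hk1 : 1 ≤ k) (hk2 : k ≤ n / r) :
    ∃ (G : SimpleGraph (Fin n)) (d : Fin n → ℕ) (σ : Equiv.Perm (Fin n)),
      Monotone d ∧ (∀ i, d i = deg G (σ i)) ∧
      (∀ i : ℕ, 1 ≤ i → i ≤ n / r → i ≠ k →
        ∀ j : Fin n, (j : ℕ) = n - i * (r - 1) → n - i ≤ d j) ∧
      (∀ j : Fin n, (j : ℕ) = n - k * (r - 1) → d j = n - k - 1) ∧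
      ¬ HasPerfectKrPacking G r :=
  stmt12_general n r k hr hk1 hk2
end
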